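/- arXiv:quant-ph/0308062 — 6 statements merged into one kernel-verified Lean document; each statement's English description precedes it below -/
import Mathlib

section
/- If τ[ψ] = λψ and φ is a nonvanishing solution of τ[φ] = λ₀φ with σ = -log φ, then ψ̂ := ψ' + σ'·ψ satisfies τ̂[ψ̂] = λψ̂, where τ̂ is the Schrödinger operator with partner potential Û = U + 2σ''. -/
/-!
With the superpotential `W = σ' = -φ'/φ`, the eigen-equation for `φ` is the Riccati equation
`W' = W² - (U - λ₀)`, i.e. `τ - λ₀ = A†A` with `A = d/dx + W`, `A† = -d/dx + W`, while the
partner `τ̂ - λ₀ = AA†` has potential `W² + W' + λ₀ = U + 2σ''`. Then `A(τ - λ₀) = (τ̂ - λ₀)A`,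
so `A` maps `λ`-eigenfunctions of `τ` to `λ`-eigenfunctions of `τ̂`; concretely
`(Aψ)' = W·Aψ + (λ₀ - λ)ψ`, and differentiating once more gives `(Aψ)'' = (W' + W² + λ₀ - λ)·Aψ`.
-/

open Real

theorem hasDerivAt_deriv_of_schrodinger {U ψ : ℝ → ℝ} {lam : ℝ} {x : ℝ}
    (hψ : DifferentiableAt ℝ (deriv ψ) x)
    (heig : -deriv (deriv ψ) x + U x * ψ x = lam * ψ x) :
    HasDerivAt (deriv ψ) ((U x - lam) * ψ x) x :=
  hψ.hasDerivAt.congr_deriv (by linarith)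

theorem darboux_of_riccati {U W ψ : ℝ → ℝ} {lam0 lam : ℝ}
    (hW : ∀ x, HasDerivAt W (W x ^ 2 - (U x - lam0)) x) (hψ : ContDiff ℝ 2 ψ)
    (heig : ∀ x, -deriv (deriv ψ) x + U x * ψ x = lam * ψ x) (x : ℝ) :
    -deriv (deriv fun y => deriv ψ y + W y * ψ y) x
        + (U x + 2 * deriv W x) * (deriv ψ x + W x * ψ x)
      = lam * (deriv ψ x + W x * ψ x) := by
  set ψhat := fun y => deriv ψ y + W y * ψ y
  have hψ₁ (y : ℝ) : HasDerivAt ψ (deriv ψ y) y :=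
    (hψ.differentiable two_ne_zero y).hasDerivAt
  have hψ₂ (y : ℝ) : HasDerivAt (deriv ψ) ((U y - lam) * ψ y) y :=
    hasDerivAt_deriv_of_schrodinger (hψ.differentiable_deriv_two y) (heig y)
  have hψhat₁ : deriv ψhat = fun y => W y * ψhat y + (lam0 - lam) * ψ y := by
    funext y
    refine ((hψ₂ y).add ((hW y).mul (hψ₁ y))).deriv.trans ?_
    ring
  have hψhat₂ : HasDerivAt (deriv ψhat)
      ((W x ^ 2 - (U x - lam0) + W x ^ 2 + lam0 - lam) * ψhat x) x := by
    rw [hψhat₁]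
    refine (((hW x).mul ((hψ₂ x).add ((hW x).mul (hψ₁ x)))).add
      ((hψ₁ x).const_mul (lam0 - lam))).congr_deriv ?_
    simp only [ψhat, Pi.add_apply, Pi.mul_apply]
    ring
  rw [hψhat₂.deriv, (hW x).deriv]
  ring

theorem hasDerivAt_deriv_neg_log_of_schrodinger {U φ : ℝ → ℝ} {lam0 : ℝ} (hφ : ContDiff ℝ 2 φ)
    (hφ0 : ∀ x, φ x ≠ 0) (heig : ∀ x, -deriv (deriv φ) x + U x * φ x = lam0 * φ x) (x : ℝ) :
    HasDerivAt (deriv fun y => -log (φ y))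
      ((deriv (fun y => -log (φ y)) x) ^ 2 - (U x - lam0)) x := by
  have hφ₁ (y : ℝ) : HasDerivAt φ (deriv φ y) y :=
    (hφ.differentiable two_ne_zero y).hasDerivAt
  have hσ₁ : deriv (fun y => -log (φ y)) = fun y => -(deriv φ y / φ y) := by
    funext y
    exact ((hφ₁ y).log (hφ0 y)).neg.deriv
  rw [hσ₁]
  refine ((hasDerivAt_deriv_of_schrodinger (hφ.differentiable_deriv_two x) (heig x)).div
    (hφ₁ x) (hφ0 x)).neg.congr_deriv ?_
  field_simp [hφ0 x]
  ring

theorem darboux_transforms_eigenfunctions_general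
    (U φ ψ : ℝ → ℝ) (lam0 lam : ℝ)
    (hφ : ContDiff ℝ 3 φ) (hψ : ContDiff ℝ 3 ψ)
    (hφ0 : ∀ x, φ x ≠ 0)
    (heigφ : ∀ x, -(deriv (deriv φ) x) + U x * φ x = lam0 * φ x)
    (heigψ : ∀ x, -(deriv (deriv ψ) x) + U x * ψ x = lam * ψ x)
    (σ Uhat ψhat : ℝ → ℝ)
    (hσ : σ = fun x => -Real.log (φ x))
    (hUhat : Uhat = fun x => U x + 2 * deriv (deriv σ) x)
    (hψhat : ψhat = fun x => deriv ψ x + deriv σ x * ψ x) :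
    ∀ x, -(deriv (deriv ψhat) x) + Uhat x * ψhat x = lam * ψhat x := by
  subst hσ hUhat hψhat
  have hriccati := hasDerivAt_deriv_neg_log_of_schrodinger (hφ.of_le (by norm_num)) hφ0 heigφ
  exact darboux_of_riccati hriccati (hψ.of_le (by norm_num)) heigψ

/-- if τ[ψ] = λψ and τ[φ] = λ₀φ with φ nonvanishing, σ = -log φ,
then ψ̂ := ψ' + σ'·ψ satisfies τ̂[ψ̂] = λψ̂ where τ̂ has partner potential Û = U + 2σ''. -/
theorem darboux_transforms_eigenfunctions
    (U φ ψ : ℝ → ℝ) (lam0 lam : ℝ)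
    (hU : Differentiable ℝ U)
    (hφ : ContDiff ℝ 3 φ) (hψ : ContDiff ℝ 3 ψ)
    (hφ0 : ∀ x, φ x ≠ 0)
    (heigφ : ∀ x, -(deriv (deriv φ) x) + U x * φ x = lam0 * φ x)
    (heigψ : ∀ x, -(deriv (deriv ψ) x) + U x * ψ x = lam * ψ x)
    (σ Uhat ψhat : ℝ → ℝ)
    (hσ : σ = fun x => -Real.log (φ x))
    (hUhat : Uhat = fun x => U x + 2 * deriv (deriv σ) x)
    (hψhat : ψhat = fun x => deriv ψ x + deriv σ x * ψ x) :
    ∀ x, -(deriv (deriv ψhat) x) + Uhat x * ψhat x = lam * ψhat x :=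
  darboux_transforms_eigenfunctions_general U φ ψ lam0 lam hφ hψ hφ0 heigφ heigψ σ Uhat ψhat hσ
    hUhat hψhat
end

section
/- If φ is a nonvanishing twice differentiable solution of -φ'' + U·φ = λ₀·φ, then ψ := 1/φ satisfies -ψ'' + Û·ψ = λ₀·ψ, where Û = U + 2(-log φ)''. In other words, the reciprocal of the factorization function is an eigenfunction of the partner Hamiltonian with the factorization energy. -/
/-! Both second derivatives are explicit in `φ, φ', φ''`: `(log φ)'' = (φ φ'' - φ'²)/φ²` and
`(1/φ)'' = (2φ'² - φ φ'')/φ³`. Substituting them gives the pointwise identity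
`-ψ'' + Û ψ - λ₀ ψ = (-φ'' + U φ - λ₀ φ)/φ²`, whose right-hand side vanishes by the
eigenvalue equation for `φ`. -/

open Real

section SecondDerivatives

variable {φ : ℝ → ℝ} (hφ : Differentiable ℝ φ) (hφ' : Differentiable ℝ (deriv φ))
  (hφ0 : ∀ x, φ x ≠ 0)

include hφ hφ' hφ0

theorem deriv_deriv_log_comp (x : ℝ) :
    deriv (deriv fun y => log (φ y)) x =
      (φ x * deriv (deriv φ) x - deriv φ x ^ 2) / φ x ^ 2 := by
  have hlog : deriv (fun y => log (φ y)) = fun y => deriv φ y / φ y :=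
    funext fun y => deriv.log (hφ y) (hφ0 y)
  rw [hlog, deriv_fun_div (hφ' x) (hφ x) (hφ0 x)]
  ring

theorem deriv_deriv_one_div_comp (x : ℝ) :
    deriv (deriv fun y => 1 / φ y) x =
      (2 * deriv φ x ^ 2 - φ x * deriv (deriv φ) x) / φ x ^ 3 := by
  have hinv : deriv (fun y => 1 / φ y) = fun y => -deriv φ y / φ y ^ 2 := by
    funext y
    rw [deriv_const_div 1 (hφ y) (hφ0 y), neg_one_mul]
  rw [hinv, deriv_fun_div (hφ' x).fun_neg ((hφ x).fun_pow 2) (pow_ne_zero 2 (hφ0 x)),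
    deriv.fun_neg, deriv_fun_pow (hφ x)]
  field_simp [hφ0 x]
  ring

theorem partner_residual_reciprocal (U : ℝ → ℝ) (lam0 x : ℝ) :
    -deriv (deriv fun y => 1 / φ y) x
        + (U x - 2 * deriv (deriv fun y => log (φ y)) x) * (1 / φ x) - lam0 * (1 / φ x) =
      (-deriv (deriv φ) x + U x * φ x - lam0 * φ x) / φ x ^ 2 := by
  rw [deriv_deriv_one_div_comp hφ hφ' hφ0, deriv_deriv_log_comp hφ hφ' hφ0]
  field_simp [hφ0 x]
  ring

end SecondDerivatives

theorem reciprocal_eigenfunction_of_partner_general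
    (U φ : ℝ → ℝ) (lam0 : ℝ)
    (hφ : Differentiable ℝ φ) (hφ' : Differentiable ℝ (deriv φ))
    (hφ0 : ∀ x, φ x ≠ 0)
    (heig : ∀ x, -(deriv (deriv φ) x) + U x * φ x = lam0 * φ x)
    (Uhat ψ : ℝ → ℝ)
    (hUhat : Uhat = fun x => U x - 2 * deriv (deriv (fun y => Real.log (φ y))) x)
    (hψ : ψ = fun x => 1 / φ x) :
    ∀ x, -(deriv (deriv ψ) x) + Uhat x * ψ x = lam0 * ψ x := by
  subst hUhat hψ
  intro x
  have h := partner_residual_reciprocal hφ hφ' hφ0 U lam0 x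
  rw [heig x, sub_self, zero_div] at h
  exact sub_eq_zero.mp h

/-- if -φ'' + U·φ = λ₀·φ with φ nonvanishing, then ψ = 1/φ satisfies
-ψ'' + Û·ψ = λ₀·ψ with the partner potential Û = U - 2(log φ)''. -/
theorem reciprocal_eigenfunction_of_partner
    (U φ : ℝ → ℝ) (lam0 : ℝ)
    (hU : Continuous U)
    (hφ : Differentiable ℝ φ) (hφ' : Differentiable ℝ (deriv φ))
    (hφ0 : ∀ x, φ x ≠ 0)
    (heig : ∀ x, -(deriv (deriv φ) x) + U x * φ x = lam0 * φ x)
    (Uhat ψ : ℝ → ℝ)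
    (hUhat : Uhat = fun x => U x - 2 * deriv (deriv (fun y => Real.log (φ y))) x)
    (hψ : ψ = fun x => 1 / φ x) :
    ∀ x, -(deriv (deriv ψ) x) + Uhat x * ψ x = lam0 * ψ x :=
  reciprocal_eigenfunction_of_partner_general U φ lam0 hφ hφ' hφ0 heig Uhat ψ hUhat hψ
end

section
/- For a nonnegative integer m and real c, the function y(z) = z^{1-c} · L_m^{1-c}(z) solves the confluent hypergeometric equation z·y'' + (c - z)·y' - a·y = 0 with c - a = 1 + m, on the domain z > 0. -/
/-- The generalized Laguerre polynomial L_m^α(x) = ∑_{k=0}^m (-1)^k/(k!(m-k)!) · (∏_{j=k+1}^m (α+j)) · x^k. -/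
noncomputable def genLaguerre (m : ℕ) (α : ℝ) (x : ℝ) : ℝ :=
  ∑ k ∈ Finset.range (m + 1),
    ((-1 : ℝ) ^ k / ((Nat.factorial k : ℝ) * (Nat.factorial (m - k) : ℝ)))
      * (∏ j ∈ Finset.Icc (k + 1) m, (α + (j : ℝ))) * x ^ k

/-!
Substituting `y = x^α p` turns Kummer's operator `x y'' + (1 - α - x) y' + (α + μ) y` into
`x^α (x p'' + (α + 1 - x) p' + μ p)`, so with `α = 1 - c` and `μ = m` it suffices that
`L_m^α` satisfies Laguerre's equation `x L'' + (α + 1 - x) L' + m L = 0`. On coefficients this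
equation is the two-term recurrence `(k + 1)(α + k + 1) ℓ_{k+1} + (m - k) ℓ_k = 0`.
-/

open Polynomial Finset
open scoped Nat

noncomputable section

namespace GenLaguerre

def coeff (m : ℕ) (α : ℝ) (k : ℕ) : ℝ :=
  if k ≤ m then (-1) ^ k / ((k ! : ℝ) * ((m - k) ! : ℝ)) * ∏ j ∈ Icc (k + 1) m, (α + j) else 0

theorem coeff_succ_recurrence (m : ℕ) (α : ℝ) (k : ℕ) :
    ((k : ℝ) + 1) * (α + k + 1) * coeff m α (k + 1) + ((m : ℝ) - k) * coeff m α k = 0 := by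
  rcases lt_trichotomy k m with hkm | rfl | hkm
  · have hIcc : Icc (k + 1) m = insert (k + 1) (Icc (k + 1 + 1) m) := by
      ext j; simp only [mem_Icc, mem_insert]; omega
    have hfact : m - k = (m - (k + 1)) + 1 := by omega
    have hcast : ((m - (k + 1) : ℕ) : ℝ) + 1 = m - k := by
      rw [Nat.cast_sub hkm]; push_cast; ring
    have hmk : (m : ℝ) - k ≠ 0 := sub_ne_zero.2 (by exact_mod_cast hkm.ne')
    rw [coeff, coeff, if_pos (Nat.succ_le_of_lt hkm), if_pos hkm.le, hIcc, prod_insert (by simp),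
      hfact, Nat.factorial_succ (m - (k + 1)), Nat.factorial_succ k]
    push_cast [hcast]
    field_simp
    ring
  · simp [coeff]
  · simp [coeff, hkm.not_ge, (hkm.trans k.lt_succ_self).not_ge]

end GenLaguerre

def genLaguerrePoly (m : ℕ) (α : ℝ) : ℝ[X] :=
  ∑ k ∈ range (m + 1), C (GenLaguerre.coeff m α k) * X ^ k

theorem genLaguerrePoly_coeff (m : ℕ) (α : ℝ) (k : ℕ) :
    (genLaguerrePoly m α).coeff k = GenLaguerre.coeff m α k := by
  rw [genLaguerrePoly, finsetSum_coeff]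
  simp only [coeff_C_mul, coeff_X_pow, mul_ite, mul_one, mul_zero, sum_ite_eq, mem_range]
  split_ifs with hk
  · rfl
  · rw [GenLaguerre.coeff, if_neg (by omega)]

theorem eval_genLaguerrePoly (m : ℕ) (α x : ℝ) :
    (genLaguerrePoly m α).eval x = genLaguerre m α x := by
  rw [genLaguerrePoly, genLaguerre, eval_finsetSum]
  refine sum_congr rfl fun k hk => ?_
  rw [GenLaguerre.coeff, if_pos (Nat.lt_succ_iff.1 (mem_range.1 hk)), eval_mul, eval_C, eval_pow,
    eval_X]

theorem genLaguerrePoly_ode (m : ℕ) (α : ℝ) :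
    X * derivative (derivative (genLaguerrePoly m α))
      + (C (α + 1) - X) * derivative (genLaguerrePoly m α) + C (m : ℝ) * genLaguerrePoly m α
      = 0 := by
  ext n
  cases n with
  | zero =>
    simp only [coeff_add, mul_coeff_zero, coeff_X_zero, zero_mul, coeff_sub, coeff_C_zero,
      sub_zero, coeff_derivative, genLaguerrePoly_coeff, coeff_zero]
    linear_combination GenLaguerre.coeff_succ_recurrence m α 0
  | succ n =>
    simp only [coeff_add, sub_mul, coeff_sub, coeff_X_mul, coeff_C_mul, coeff_derivative,
      genLaguerrePoly_coeff, coeff_zero]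
    have h := GenLaguerre.coeff_succ_recurrence m α (n + 1)
    push_cast at h ⊢
    linear_combination h

theorem hasDerivAt_rpow_mul_eval (α : ℝ) (p : ℝ[X]) {x : ℝ} (hx : x ≠ 0) :
    HasDerivAt (fun t => t ^ α * p.eval t)
      (x ^ (α - 1) * (C α * p + X * derivative p).eval x) x := by
  refine ((Real.hasDerivAt_rpow_const (p := α) (Or.inl hx)).mul (p.hasDerivAt x)).congr_deriv ?_
  rw [Real.rpow_sub_one hx]
  simp only [eval_add, eval_mul, eval_C, eval_X]
  field_simp

theorem deriv_rpow_mul_eval_eventuallyEq (α : ℝ) (p : ℝ[X]) {x : ℝ} (hx : x ≠ 0) :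
    deriv (fun t => t ^ α * p.eval t)
      =ᶠ[nhds x] fun t => t ^ (α - 1) * (C α * p + X * derivative p).eval t := by
  filter_upwards [isOpen_ne.mem_nhds hx] with t ht using (hasDerivAt_rpow_mul_eval α p ht).deriv

theorem kummer_rpow_mul_eval (α μ : ℝ) (p : ℝ[X]) {x : ℝ} (hx : x ≠ 0) :
    x * deriv (deriv fun t => t ^ α * p.eval t) x
        + (1 - α - x) * deriv (fun t => t ^ α * p.eval t) x + (α + μ) * (x ^ α * p.eval x)
      = x ^ α *
          (X * derivative (derivative p) + (C (α + 1) - X) * derivative p + C μ * p).eval x := by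
  rw [(deriv_rpow_mul_eval_eventuallyEq α p hx).deriv_eq,
    (hasDerivAt_rpow_mul_eval (α - 1) _ hx).deriv, (hasDerivAt_rpow_mul_eval α p hx).deriv]
  have h₁ : x ^ (α - 1) * x = x ^ α := by rw [Real.rpow_sub_one hx]; field_simp
  have h₂ : x ^ (α - 1 - 1) * x = x ^ (α - 1) := by rw [Real.rpow_sub_one hx (α - 1)]; field_simp
  simp only [eval_add, eval_sub, eval_mul, eval_C, eval_X, derivative_add, derivative_mul,
    derivative_C, derivative_X, zero_mul, zero_add, one_mul]
  rw [← h₁, ← h₂]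
  ring

end

/-- y(z) = z^{1-c} · L_m^{1-c}(z) solves z·y'' + (c-z)·y' - a·y = 0 with
c - a = 1 + m, i.e. a = c - 1 - m, on the domain z > 0. -/
theorem power_laguerre_solves_chg (m : ℕ) (c : ℝ)
    (y : ℝ → ℝ) (hy : y = fun z => z ^ (1 - c) * genLaguerre m (1 - c) z) :
    ∀ z : ℝ, 0 < z →
      z * deriv (deriv y) z + (c - z) * deriv y z - (c - 1 - (m : ℝ)) * y z = 0 := by
  intro z hz
  have hy' : y = fun t => t ^ (1 - c) * (genLaguerrePoly m (1 - c)).eval t := by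
    simp only [hy, eval_genLaguerrePoly]
  have hkummer := kummer_rpow_mul_eval (1 - c) m (genLaguerrePoly m (1 - c)) hz.ne'
  rw [genLaguerrePoly_ode, eval_zero, mul_zero] at hkummer
  subst hy'
  linear_combination hkummer
end

section
/- For every even nonnegative integer m = 2k, the function φ(x) = H_{2k}(ix)·e^{x²/2} (which is real-valued up to a constant factor) satisfies -φ'' + x²·φ = (-1 - 4k)·φ, and H_{2k}(ix) is a real multiple of a real polynomial in x² with no real zeros. -/
/-- The physicists' Hermite polynomials: H₀ = 1, H₁ = 2x, H_{n+2} = 2x·H_{n+1} - 2(n+1)·H_n. -/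
noncomputable def hermiteP : ℕ → Polynomial ℝ
  | 0 => 1
  | 1 => Polynomial.C 2 * Polynomial.X
  | (n + 2) => Polynomial.C 2 * Polynomial.X * hermiteP (n + 1)
      - Polynomial.C (2 * ((n : ℝ) + 1)) * hermiteP n

/-!
Put `y = i x`. For `φ(x) = Q(y) e^{x²/2}` one computes
`-φ'' + x² φ = (Q'' - 2 y Q' - Q)(y) e^{x²/2}`, so Hermite's equation
`H_n'' - 2 y H_n' = -2n H_n` makes `φ` an eigenfunction with eigenvalue `-1 - 2n`.

For the factorization, `H_n(i x) = iⁿ G_n(x)`, where `G_n` satisfies the Hermite recursion with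
the sign of its second term flipped, `G_{n+2} = 2x G_{n+1} + 2(n+1) G_n`. This recursion shows
that `G_n ≥ 0` and `G_{2k} > 0` on `[0, ∞)`, and that `G_n` only has monomials of the parity of
`n`; hence `G_{2k}(x) = h(x²)` with `h(x²) = G_{2k}(|x|) > 0`.
-/

open Polynomial Complex

lemma Polynomial.expand_contract_of_coeff_eq_zero {R : Type*} [CommSemiring R] {p : ℕ}
    (hp : p ≠ 0) {f : R[X]} (hf : ∀ n, ¬ p ∣ n → f.coeff n = 0) :
    expand R p (contract p f) = f := by
  ext n
  rw [coeff_expand hp.bot_lt, coeff_contract hp]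
  split_ifs with h
  · rw [Nat.div_mul_cancel h]
  · exact (hf n h).symm

@[simp] lemma hermiteP_zero : hermiteP 0 = 1 := rfl

@[simp] lemma hermiteP_one : hermiteP 1 = C 2 * X := rfl

lemma hermiteP_add_two (n : ℕ) :
    hermiteP (n + 2) = C 2 * X * hermiteP (n + 1) - C (2 * ((n : ℝ) + 1)) * hermiteP n := by
  rw [hermiteP]

lemma derivative_hermiteP_succ (n : ℕ) :
    derivative (hermiteP (n + 1)) = C (2 * ((n : ℝ) + 1)) * hermiteP n := by
  induction n using Nat.twoStepInduction with
  | zero => simp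
  | one =>
    rw [hermiteP_add_two]
    simp
    ring
  | more n ih₀ ih₁ =>
    rw [hermiteP_add_two]
    simp only [derivative_sub, derivative_mul, derivative_C, derivative_X, ih₁, ih₀]
    rw [hermiteP_add_two]
    push_cast
    simp only [map_mul, map_add, map_natCast, map_one, map_ofNat]
    ring

lemma hermiteP_succ (n : ℕ) :
    hermiteP (n + 1) = C 2 * X * hermiteP n - derivative (hermiteP n) := by
  cases n with
  | zero => simp
  | succ n => rw [derivative_hermiteP_succ, hermiteP_add_two]

lemma hermiteP_ode (n : ℕ) :
    derivative (derivative (hermiteP n)) - 2 * X * derivative (hermiteP n)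
      = C (-(2 * n : ℝ)) * hermiteP n := by
  cases n with
  | zero => simp
  | succ n =>
    rw [derivative_hermiteP_succ, derivative_mul, derivative_C, hermiteP_succ n]
    push_cast
    simp only [map_mul, map_add, map_neg, map_natCast, map_one, map_ofNat]
    ring

noncomputable def imagHermite : ℕ → ℝ[X]
  | 0 => 1
  | 1 => C 2 * X
  | (n + 2) => C 2 * X * imagHermite (n + 1) + C (2 * ((n : ℝ) + 1)) * imagHermite n

lemma aeval_I_mul_hermiteP (n : ℕ) (z : ℂ) :
    aeval (I * z) (hermiteP n) = I ^ n * aeval z (imagHermite n) := by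
  induction n using Nat.twoStepInduction with
  | zero => simp [imagHermite]
  | one => simp [imagHermite]; ring
  | more n ih₀ ih₁ =>
    rw [hermiteP_add_two, imagHermite]
    simp only [map_sub, map_add, map_mul, aeval_C, aeval_X, ih₀, ih₁]
    push_cast
    linear_combination (-2 * (n + 1) * aeval z (imagHermite n) * I ^ n) * I_sq

lemma coeff_imagHermite_eq_zero_of_odd_add (n j : ℕ) (h : Odd (n + j)) :
    (imagHermite n).coeff j = 0 := by
  induction n using Nat.twoStepInduction generalizing j with
  | zero => simp [imagHermite, coeff_one, show j ≠ 0 by rintro rfl; simp at h]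
  | one =>
    cases j with
    | zero => simp [imagHermite]
    | succ j => simp [imagHermite, coeff_C, show j ≠ 0 by rintro rfl; norm_num at h]
  | more n ih₀ ih₁ =>
    have hn : Odd (n + j) := by
      simpa [show n + 2 + j = n + j + 2 by ring, Nat.odd_add_one] using h
    rw [imagHermite, coeff_add, mul_assoc, coeff_C_mul, coeff_C_mul, ih₀ j hn, mul_zero, add_zero]
    cases j with
    | zero => simp
    | succ j => rw [coeff_X_mul, ih₁ j (by simpa [show n + 1 + j = n + (j + 1) by ring] using hn),
        mul_zero]

lemma eval_imagHermite_nonneg (n : ℕ) {t : ℝ} (ht : 0 ≤ t) : 0 ≤ (imagHermite n).eval t := by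
  induction n using Nat.twoStepInduction with
  | zero => simp [imagHermite]
  | one => simp [imagHermite]; positivity
  | more n ih₀ ih₁ =>
    simp only [imagHermite, eval_add, eval_mul, eval_C, eval_X]
    positivity

lemma eval_imagHermite_two_mul_pos (k : ℕ) {t : ℝ} (ht : 0 ≤ t) :
    0 < (imagHermite (2 * k)).eval t := by
  induction k with
  | zero => simp [imagHermite]
  | succ k ih =>
    have h₁ := eval_imagHermite_nonneg (2 * k + 1) ht
    simp only [show 2 * (k + 1) = 2 * k + 2 by ring, imagHermite, eval_add, eval_mul, eval_C,
      eval_X]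
    positivity

lemma hasDerivAt_eval_I_mul_mul_cexp (Q : ℂ[X]) (x : ℝ) :
    HasDerivAt (fun x : ℝ => Q.eval (I * x) * cexp ((x : ℂ) ^ 2 / 2))
      ((C I * (derivative Q - X * Q)).eval (I * x) * cexp ((x : ℂ) ^ 2 / 2)) x := by
  have hQ : HasDerivAt (fun z : ℂ => Q.eval (I * z)) (Q.derivative.eval (I * x) * I) x :=
    (Q.hasDerivAt (I * x)).comp (x : ℂ) ((hasDerivAt_id (x : ℂ)).const_mul I |>.congr_deriv
      (mul_one I))
  have hexp : HasDerivAt (fun z : ℂ => cexp (z ^ 2 / 2)) (cexp ((x : ℂ) ^ 2 / 2) * x) x := by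
    refine ((hasDerivAt_pow 2 (x : ℂ)).div_const 2).cexp.congr_deriv ?_
    push_cast
    ring
  refine (hQ.mul hexp).comp_ofReal.congr_deriv ?_
  simp only [eval_mul, eval_sub, eval_C, eval_X]
  linear_combination ((x : ℂ) * Q.eval (I * x) * cexp ((x : ℂ) ^ 2 / 2)) * I_sq

lemma deriv_eval_I_mul_mul_cexp (Q : ℂ[X]) :
    deriv (fun x : ℝ => Q.eval (I * x) * cexp ((x : ℂ) ^ 2 / 2))
      = fun x : ℝ => (C I * (derivative Q - X * Q)).eval (I * x) * cexp ((x : ℂ) ^ 2 / 2) :=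
  funext fun x => (hasDerivAt_eval_I_mul_mul_cexp Q x).deriv

lemma harmonicOscillator_eval_I_mul_mul_cexp {Q : ℂ[X]} {c : ℂ}
    (hQ : derivative (derivative Q) - 2 * X * derivative Q = C c * Q) (x : ℝ) :
    -deriv (deriv fun x : ℝ => Q.eval (I * x) * cexp ((x : ℂ) ^ 2 / 2)) x
        + (x : ℂ) ^ 2 * (Q.eval (I * x) * cexp ((x : ℂ) ^ 2 / 2))
      = (c - 1) * (Q.eval (I * x) * cexp ((x : ℂ) ^ 2 / 2)) := by
  have hQx := congrArg (eval (I * x)) hQ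
  simp only [eval_sub, eval_mul, eval_C, eval_X, eval_ofNat] at hQx
  rw [deriv_eval_I_mul_mul_cexp, deriv_eval_I_mul_mul_cexp]
  simp only [derivative_mul, derivative_sub, derivative_C, derivative_X, eval_mul, eval_sub,
    eval_add, eval_C, eval_X, zero_mul, one_mul, zero_add]
  linear_combination cexp ((x : ℂ) ^ 2 / 2) * hQx + (2 * I * x * (derivative Q).eval (I * x)
    - (derivative (derivative Q)).eval (I * x) + (1 + (1 - I ^ 2) * x ^ 2) * Q.eval (I * x))
    * cexp ((x : ℂ) ^ 2 / 2) * I_sq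

lemma harmonicOscillator_aeval_I_mul_hermiteP_mul_cexp (n : ℕ) (x : ℝ) :
    -deriv (deriv fun x : ℝ => aeval (I * x) (hermiteP n) * cexp ((x : ℂ) ^ 2 / 2)) x
        + (x : ℂ) ^ 2 * (aeval (I * x) (hermiteP n) * cexp ((x : ℂ) ^ 2 / 2))
      = (-1 - 2 * n) * (aeval (I * x) (hermiteP n) * cexp ((x : ℂ) ^ 2 / 2)) := by
  have hode := congrArg (map (algebraMap ℝ ℂ)) (hermiteP_ode n)
  simp only [Polynomial.map_sub, Polynomial.map_mul, Polynomial.map_ofNat, map_X, map_C,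
    ← derivative_map] at hode
  simp only [aeval_def, eval₂_eq_eval_map]
  rw [harmonicOscillator_eval_I_mul_mul_cexp hode]
  push_cast
  ring

/-- for m = 2k even, φ(x) = H_{2k}(ix)·e^{x²/2} satisfies
-φ'' + x²·φ = (-1-4k)·φ, and H_{2k}(ix) = (-1)^k·h(x²) for a real polynomial h with
no zeros at nonnegative reals (so H_{2k}(ix) has no real zeros). -/
theorem hermite_imaginary_factorization_function (k : ℕ)
    (φ : ℝ → ℂ)
    (hφ : φ = fun x : ℝ =>
      Polynomial.aeval (Complex.I * (x : ℂ)) (hermiteP (2 * k)) * Complex.exp ((x : ℂ) ^ 2 / 2)) :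
    (∀ x : ℝ, -(deriv (deriv φ) x) + ((x : ℂ) ^ 2) * φ x = ((-1 - 4 * (k : ℝ) : ℝ) : ℂ) * φ x) ∧
    (∃ h : Polynomial ℝ,
      (∀ x : ℝ, Polynomial.aeval (Complex.I * (x : ℂ)) (hermiteP (2 * k))
          = (((-1 : ℝ) ^ k * h.eval (x ^ 2) : ℝ) : ℂ)) ∧
      (∀ x : ℝ, h.eval (x ^ 2) ≠ 0)) := by
  subst hφ
  have hcoeff (j : ℕ) (hj : ¬ 2 ∣ j) : (imagHermite (2 * k)).coeff j = 0 :=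
    coeff_imagHermite_eq_zero_of_odd_add _ _
      ((even_two_mul k).add_odd (Nat.odd_iff.mpr (Nat.two_dvd_ne_zero.mp hj)))
  have hcontract (x : ℝ) : (contract 2 (imagHermite (2 * k))).eval (x ^ 2)
      = (imagHermite (2 * k)).eval x := by
    rw [← expand_eval, expand_contract_of_coeff_eq_zero two_ne_zero hcoeff]
  refine ⟨fun x => ?_, contract 2 (imagHermite (2 * k)), fun x => ?_, fun x => ?_⟩
  · convert harmonicOscillator_aeval_I_mul_hermiteP_mul_cexp (2 * k) x using 2
    push_cast
    ring
  · rw [hcontract, aeval_I_mul_hermiteP, pow_mul, I_sq, ofReal_mul, ofReal_pow, ofReal_neg,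
      ofReal_one]
    exact congrArg _ (aeval_algebraMap_apply_eq_algebraMap_eval x _)
  · rw [← sq_abs, hcontract]
    exact (eval_imagHermite_two_mul_pos k (abs_nonneg x)).ne'
end

section
/- For even nonnegative integer m and A > 0, the polynomial z ↦ L_m^{-2(1+m+A)}(-z) has no zeros on [0, ∞); consequently the factorization function φ(x) = e^{(m+A+1)x + e^{-x}/2}·L_m^{-2(1+m+A)}(-e^{-x}) is nonvanishing on ℝ. -/
/-!
For `B > m` the moments of the weight `t ^ (B - m - 1) * exp (-t)` on `(0, ∞)` are Gamma values, and
`m! Γ(B - m) L_m^{-B}(x) = (-1)^m ∫₀^∞ t ^ (B - m - 1) (t + x)^m e^{-t} dt`.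
For even `m` the integrand is nonnegative and vanishes at most at one point, so `L_m^{-B}` is
positive on all of `ℝ`. The theorem is the case `B = 2 (1 + m + A)`.
-/

open MeasureTheory Set Finset Nat

section

variable {m : ℕ} {B : ℝ}

lemma Real.Gamma_sub_natCast_eq_mul_prod (hB : (m : ℝ) < B) {k : ℕ} (hk : k ≤ m) :
    Real.Gamma (B - k) = Real.Gamma (B - m) * ∏ j ∈ Icc (k + 1) m, (B - j) := by
  induction m, hk using Nat.le_induction with
  | base => simp
  | succ n hkn ih =>
    have hn : (n : ℝ) < B := by push_cast at hB; linarith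
    have hstep : Real.Gamma (B - n) = (B - (n + 1 : ℕ)) * Real.Gamma (B - (n + 1 : ℕ)) := by
      rw [← Real.Gamma_add_one (by push_cast at hB ⊢; linarith)]
      push_cast; ring_nf
    rw [ih hn, hstep, prod_Icc_succ_top (by omega)]
    ring

lemma factorial_mul_Gamma_mul_genLaguerre_neg (hB : (m : ℝ) < B) (x : ℝ) :
    m ! * Real.Gamma (B - m) * genLaguerre m (-B) x =
      (-1) ^ m * ∑ k ∈ range (m + 1), (m.choose k : ℝ) * x ^ k * Real.Gamma (B - k) := by
  rw [genLaguerre, mul_sum, mul_sum]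
  refine sum_congr rfl fun k hk => ?_
  have hkm : k ≤ m := Nat.lt_succ_iff.mp (mem_range.mp hk)
  have hprod : ∏ j ∈ Icc (k + 1) m, (-B + j) = (-1) ^ (m - k) * ∏ j ∈ Icc (k + 1) m, (B - j) := by
    rw [prod_congr rfl fun (j : ℕ) _ => show -B + (j : ℝ) = -(B - j) by ring, prod_neg, Nat.card_Icc,
      Nat.add_sub_add_right]
  have hsign : (-1 : ℝ) ^ k * (-1) ^ (m - k) = (-1) ^ m := by
    rw [← pow_add, Nat.add_sub_cancel' hkm]
  rw [hprod, Real.Gamma_sub_natCast_eq_mul_prod hB hkm, Nat.cast_choose ℝ hkm, ← hsign]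
  field_simp

lemma rpow_mul_add_pow_mul_exp_eq_sum (x : ℝ) {t : ℝ} (ht : 0 < t) :
    t ^ (B - m - 1) * (t + x) ^ m * Real.exp (-t) =
      ∑ k ∈ range (m + 1), (m.choose k : ℝ) * x ^ k * (Real.exp (-t) * t ^ (B - k - 1)) := by
  rw [add_comm t x, add_pow, mul_sum, sum_mul]
  refine sum_congr rfl fun k hk => ?_
  have hkm : k ≤ m := Nat.lt_succ_iff.mp (mem_range.mp hk)
  have hpow : t ^ (B - m - 1) * t ^ (m - k) = t ^ (B - k - 1) := by
    rw [← Real.rpow_natCast, ← Real.rpow_add ht, Nat.cast_sub hkm]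
    ring_nf
  rw [← hpow]
  ring

lemma integrableOn_rpow_mul_add_pow_mul_exp (hB : (m : ℝ) < B) (x : ℝ) :
    IntegrableOn (fun t => t ^ (B - m - 1) * (t + x) ^ m * Real.exp (-t)) (Ioi 0) := by
  refine (integrable_finsetSum (range (m + 1))
    (f := fun k t => (m.choose k : ℝ) * x ^ k * (Real.exp (-t) * t ^ (B - k - 1)))
    fun k hk => ?_).congr ?_
  · have hkm : (k : ℝ) ≤ m := by exact_mod_cast Nat.lt_succ_iff.mp (mem_range.mp hk)
    exact (Real.GammaIntegral_convergent (by linarith : 0 < B - k)).const_mul _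
  · filter_upwards [ae_restrict_mem measurableSet_Ioi] with t ht
    exact (rpow_mul_add_pow_mul_exp_eq_sum x ht).symm

lemma integral_rpow_mul_add_pow_mul_exp (hB : (m : ℝ) < B) (x : ℝ) :
    ∫ t in Ioi 0, t ^ (B - m - 1) * (t + x) ^ m * Real.exp (-t) =
      ∑ k ∈ range (m + 1), (m.choose k : ℝ) * x ^ k * Real.Gamma (B - k) := by
  have hBk : ∀ k ∈ range (m + 1), 0 < B - k := fun k hk => by
    have hkm : (k : ℝ) ≤ m := by exact_mod_cast Nat.lt_succ_iff.mp (mem_range.mp hk)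
    linarith
  rw [setIntegral_congr_fun measurableSet_Ioi fun t ht => rpow_mul_add_pow_mul_exp_eq_sum x ht,
    integral_finsetSum _ fun k hk => (Real.GammaIntegral_convergent (hBk k hk)).const_mul _]
  refine sum_congr rfl fun k hk => ?_
  rw [integral_const_mul, Real.Gamma_eq_integral (hBk k hk)]

lemma integral_rpow_mul_add_pow_mul_exp_pos (hm : Even m) (hB : (m : ℝ) < B) (x : ℝ) :
    0 < ∫ t in Ioi 0, t ^ (B - m - 1) * (t + x) ^ m * Real.exp (-t) := by
  have hnonneg : ∀ t ∈ Ioi (0 : ℝ), 0 ≤ t ^ (B - m - 1) * (t + x) ^ m * Real.exp (-t) :=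
    fun t (ht : 0 < t) => by have := hm.pow_nonneg (t + x); positivity
  rw [setIntegral_pos_iff_support_of_nonneg_ae
    ((ae_restrict_iff' measurableSet_Ioi).mpr (ae_of_all _ hnonneg))
    (integrableOn_rpow_mul_add_pow_mul_exp hB x)]
  refine lt_of_lt_of_le (by simp) (measure_mono (?_ : Ioi |x| ⊆ _))
  intro t (ht : |x| < t)
  have ht0 : 0 < t := (abs_nonneg x).trans_lt ht
  have htx : 0 < t + x := by linarith [neg_abs_le x]
  have := pow_pos htx m
  exact ⟨by simp only [Function.mem_support]; positivity, ht0⟩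

theorem genLaguerre_neg_pos (hm : Even m) (hB : (m : ℝ) < B) (x : ℝ) :
    0 < genLaguerre m (-B) x := by
  have hscaled : 0 < m ! * Real.Gamma (B - m) * genLaguerre m (-B) x := by
    rw [factorial_mul_Gamma_mul_genLaguerre_neg hB, hm.neg_one_pow, one_mul,
      ← integral_rpow_mul_add_pow_mul_exp hB]
    exact integral_rpow_mul_add_pow_mul_exp_pos hm hB x
  exact pos_of_mul_pos_right hscaled (by have := Real.Gamma_pos_of_pos (sub_pos.mpr hB); positivity)

end

/-- for even m and A > 0 the polynomial z ↦ L_m^{-2(1+m+A)}(-z) has no zeros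
on [0,∞); consequently the Morse factorization function
φ(x) = e^{(m+A+1)x + e^{-x}/2}·L_m^{-2(1+m+A)}(-e^{-x}) is nonvanishing on ℝ. -/
theorem morse_factorization_function_nonvanishing
    (m : ℕ) (hm : Even m) (A : ℝ) (hA : 0 < A) :
    (∀ z : ℝ, 0 ≤ z → genLaguerre m (-2 * (1 + (m : ℝ) + A)) (-z) ≠ 0) ∧
    (∀ x : ℝ, Real.exp (((m : ℝ) + A + 1) * x + Real.exp (-x) / 2)
        * genLaguerre m (-2 * (1 + (m : ℝ) + A)) (-Real.exp (-x)) ≠ 0) := by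
  have hB : (m : ℝ) < 2 * (1 + m + A) := by linarith [(Nat.cast_nonneg m : (0 : ℝ) ≤ m)]
  have hL : ∀ x : ℝ, genLaguerre m (-2 * (1 + (m : ℝ) + A)) x ≠ 0 := fun x => by
    rw [neg_mul]
    exact (genLaguerre_neg_pos hm hB x).ne'
  exact ⟨fun z _ => hL (-z), fun x => mul_ne_zero (Real.exp_ne_zero _) (hL _)⟩
end

section
/- A second-order differential operator T = a(z)∂²_z + b(z)∂_z + c(z) with polynomial or Laurent-polynomial coefficients preserves the exceptional monomial module 𝒫⁽¹⁾ₙ = span{1, z², z³, …, zⁿ} (for fixed n ≥ 4) if and only if T is a real linear combination of the seven operators: z⁴∂²_z + 2(1-n)z³∂_z + n(n-1)z², z³∂²_z - (n-1)z²∂_z, z²∂²_z, z∂²_z - ∂_z, ∂²_z - 2z⁻¹∂_z, z∂_z, and 1. -/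
/-- A function ℝ → ℝ is (away from 0) given by a Laurent polynomial. -/
def IsLaurentPoly (f : ℝ → ℝ) : Prop :=
  ∃ (p : Polynomial ℝ) (k : ℕ), ∀ z : ℝ, z ≠ 0 → f z = p.eval z / z ^ k

/-- The exceptional monomial module 𝒫⁽¹⁾ₙ = span{1, z², z³, …, zⁿ} as a space of
functions ℝ → ℝ. -/
noncomputable def excFunModule (n : ℕ) : Submodule ℝ (ℝ → ℝ) :=
  Submodule.span ℝ ({fun _ => 1} ∪ {f | ∃ k : ℕ, 2 ≤ k ∧ k ≤ n ∧ f = fun z : ℝ => z ^ k})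

/-!
Write `a, b, c` as Laurent polynomials with coefficients `α, β, γ`. The operator sends `zᵏ` to
`∑ₛ (k(k-1) α (s+2) + k β (s+1) + γ s) zᵏ⁺ˢ`, so it preserves `𝒫⁽¹⁾ₙ` iff this coefficient vanishes
whenever `k` is an exponent of the module and `k + s` is not. For fixed `s` the coefficient is
quadratic in `k`. Taking `k = n - 2, n - 1, n` kills all terms with `s ≥ 3` and ties `β 3, γ 2` to
`α 4` and `β 2` to `α 3`; taking `k = 0, 2, 3, 4` kills the terms of negative degree and ties
`β 0, β (-1)` to `α 1, α 0`. Conversely, for the seven operators the coefficient factors as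
`(n-k)(n-k-1)`, `k(k-n)`, `k(k-2)` or `k(k-3)` times a constant, and vanishes exactly where needed.
-/

open LaurentPolynomial Polynomial

def excDegrees (n : ℕ) : Set ℤ := {m | m = 0 ∨ 2 ≤ m ∧ m ≤ n}

@[simp] lemma mem_excDegrees {n : ℕ} {m : ℤ} : m ∈ excDegrees n ↔ m = 0 ∨ 2 ≤ m ∧ m ≤ n :=
  Iff.rfl

def imageCoeff (α β γ : ℤ → ℝ) (k : ℕ) (s : ℤ) : ℝ :=
  k * (k - 1) * α (s + 2) + k * β (s + 1) + γ s

def PreservesDegrees (n : ℕ) (α β γ : ℤ → ℝ) : Prop :=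
  ∀ k : ℕ, (k : ℤ) ∈ excDegrees n → ∀ s : ℤ, k + s ∉ excDegrees n → imageCoeff α β γ k s = 0

/-- The Laurent coefficients of the real linear combinations of the seven operators. -/
structure ExcCoeffs (n : ℕ) (α β γ : ℤ → ℝ) : Prop where
  α_eq_zero : ∀ j, j < 0 ∨ 4 < j → α j = 0
  β_eq_zero : ∀ j, j < -1 ∨ 3 < j → β j = 0
  γ_eq_zero : ∀ j, j ≠ 0 → j ≠ 2 → γ j = 0
  β_three : β 3 = 2 * (1 - n) * α 4
  β_two : β 2 = -(n - 1) * α 3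
  β_zero : β 0 = -α 1
  β_neg_one : β (-1) = -2 * α 0
  γ_two : γ 2 = n * (n - 1) * α 4

namespace PreservesDegrees

variable {n : ℕ} {α β γ : ℤ → ℝ}

lemma γ_eq_zero (h : PreservesDegrees n α β γ) {s : ℤ} (hs : s ∉ excDegrees n) : γ s = 0 := by
  simpa [imageCoeff] using h 0 (by simp) s (by simpa using hs)

lemma eq_zero_of_three_le (h : PreservesDegrees n α β γ) (hn : 4 ≤ n) {s : ℤ} (hs : 3 ≤ s) :
    α (s + 2) = 0 ∧ β (s + 1) = 0 ∧ γ s = 0 := by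
  have e : ∀ k : ℕ, n - 2 ≤ k → k ≤ n → imageCoeff α β γ k s = 0 := fun k hk₁ hk₂ =>
    h k (by simp; omega) s (by simp; omega)
  have e₀ := e (n - 2) le_rfl (by omega)
  have e₁ := e (n - 1) (by omega) (by omega)
  have e₂ := e n (by omega) le_rfl
  simp only [imageCoeff, Nat.cast_sub (by omega : 2 ≤ n), Nat.cast_sub (by omega : 1 ≤ n)]
    at e₀ e₁ e₂
  push_cast at e₀ e₁ e₂
  have hα : α (s + 2) = 0 := by linear_combination (e₀ - 2 * e₁ + e₂) / 2
  have hβ : β (s + 1) = 0 := by linear_combination e₂ - e₁ - (2 * n - 2) * hα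
  exact ⟨hα, hβ, by linear_combination e₂ - n * (n - 1) * hα - n * hβ⟩

lemma eq_zero_of_le_neg_three (h : PreservesDegrees n α β γ) (hn : 4 ≤ n) {s : ℤ} (hs : s ≤ -3) :
    α (s + 2) = 0 ∧ β (s + 1) = 0 := by
  have hγ := h.γ_eq_zero (s := s) (by simp; omega)
  have e₂ := h 2 (by simp; omega) s (by simp; omega)
  simp only [imageCoeff] at e₂
  rcases (by omega : s ≤ -4 ∨ s = -3) with hs | rfl
  · have e₃ := h 3 (by simp; omega) s (by simp; omega)
    simp only [imageCoeff] at e₃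
    norm_num at e₂ e₃
    exact ⟨by linear_combination (e₃ - 3 / 2 * e₂ + hγ / 2) / 3,
      by linear_combination (3 * e₂ - e₃ - 2 * hγ) / 3⟩
  · have e₄ := h 4 (by simp; omega) (-3) (by simp)
    simp only [imageCoeff] at e₄
    norm_num at e₂ e₄ ⊢
    exact ⟨by linear_combination (e₄ - 2 * e₂ + hγ) / 8,
      by linear_combination (6 * e₂ - e₄ - 5 * hγ) / 8⟩

lemma β_three_and_γ_two (h : PreservesDegrees n α β γ) (hn : 4 ≤ n) :
    β 3 = 2 * (1 - n) * α 4 ∧ γ 2 = n * (n - 1) * α 4 := by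
  have e₂ := h n (by simp; omega) 2 (by simp; omega)
  have e₁ := h (n - 1) (by simp; omega) 2 (by simp; omega)
  simp only [imageCoeff, Nat.cast_sub (by omega : 1 ≤ n)] at e₁ e₂
  norm_num at e₁ e₂
  exact ⟨by linear_combination e₂ - e₁, by linear_combination n * e₁ - (n - 1) * e₂⟩

lemma excCoeffs (h : PreservesDegrees n α β γ) (hn : 4 ≤ n) : ExcCoeffs n α β γ where
  α_eq_zero j hj := by
    rcases hj with hj | hj
    · simpa using (h.eq_zero_of_le_neg_three hn (s := j - 2) (by omega)).1
    · simpa using (h.eq_zero_of_three_le hn (s := j - 2) (by omega)).1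
  β_eq_zero j hj := by
    rcases hj with hj | hj
    · simpa using (h.eq_zero_of_le_neg_three hn (s := j - 1) (by omega)).2
    · simpa using (h.eq_zero_of_three_le hn (s := j - 1) (by omega)).2.1
  γ_eq_zero j hj₀ hj₂ := by
    rcases (by omega : j < 0 ∨ j = 1 ∨ 3 ≤ j) with hj | rfl | hj
    · exact h.γ_eq_zero (by simp; omega)
    · exact h.γ_eq_zero (by simp)
    · exact (h.eq_zero_of_three_le hn hj).2.2
  β_three := (h.β_three_and_γ_two hn).1
  β_two := by
    have e := h n (by simp; omega) 1 (by simp; omega)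
    have hγ : γ 1 = 0 := h.γ_eq_zero (by simp)
    simp only [imageCoeff] at e
    norm_num at e
    apply mul_left_cancel₀ (by positivity : (n : ℝ) ≠ 0)
    linear_combination e - hγ
  β_zero := by
    have e := h 2 (by simp; omega) (-1) (by simp)
    have hγ : γ (-1) = 0 := h.γ_eq_zero (by simp)
    simp only [imageCoeff] at e
    norm_num at e
    linear_combination (e - hγ) / 2
  β_neg_one := by
    have e := h 3 (by simp; omega) (-2) (by simp)
    have hγ : γ (-2) = 0 := h.γ_eq_zero (by simp)
    simp only [imageCoeff] at e
    norm_num at e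
    linear_combination (e - hγ) / 3
  γ_two := (h.β_three_and_γ_two hn).2

end PreservesDegrees

lemma ExcCoeffs.preservesDegrees {n : ℕ} {α β γ : ℤ → ℝ} (h : ExcCoeffs n α β γ) :
    PreservesDegrees n α β γ := by
  intro k hk s hks
  simp only [mem_excDegrees] at hk hks
  simp only [imageCoeff]
  rcases (by omega : s ≤ -3 ∨ s = -2 ∨ s = -1 ∨ s = 0 ∨ s = 1 ∨ s = 2 ∨ 3 ≤ s)
    with hs | rfl | rfl | rfl | rfl | rfl | hs
  · rw [h.α_eq_zero _ (by omega), h.β_eq_zero _ (by omega), h.γ_eq_zero _ (by omega) (by omega)]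
    ring
  · have hk' : (k : ℝ) * (k - 3) = 0 := by
      rcases (by omega : k = 0 ∨ k = 3) with rfl | rfl <;> norm_num
    norm_num [h.β_neg_one, h.γ_eq_zero (-2)]
    linear_combination α 0 * hk'
  · have hk' : (k : ℝ) * (k - 2) = 0 := by
      rcases (by omega : k = 0 ∨ k = 2) with rfl | rfl <;> norm_num
    norm_num [h.β_zero, h.γ_eq_zero (-1)]
    linear_combination α 1 * hk'
  · omega
  · have hk' : (k : ℝ) * (k - n) = 0 := by
      rcases (by omega : k = 0 ∨ k = n) with rfl | rfl <;> simp
    norm_num [h.β_two, h.γ_eq_zero 1]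
    linear_combination α 3 * hk'
  · have hk' : ((n : ℝ) - k) * (n - k - 1) = 0 := by
      rcases (by omega : k = n ∨ k + 1 = n) with rfl | rfl <;> push_cast <;> ring
    norm_num [h.β_three, h.γ_two]
    linear_combination α 4 * hk'
  · rw [h.α_eq_zero _ (by omega), h.β_eq_zero _ (by omega), h.γ_eq_zero _ (by omega) (by omega)]
    ring


section LaurentEval

noncomputable def laurentEval (z : ℝ) (hz : z ≠ 0) : ℝ[T;T⁻¹] →+* ℝ :=
  LaurentPolynomial.eval₂ (RingHom.id ℝ) (Units.mk0 z hz)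

variable {z : ℝ} (hz : z ≠ 0)

@[simp] lemma laurentEval_T (j : ℤ) : laurentEval z hz (T j) = z ^ j := by
  simp [laurentEval]

@[simp] lemma laurentEval_smul (r : ℝ) (L : ℝ[T;T⁻¹]) :
    laurentEval z hz (r • L) = r * laurentEval z hz L := by
  simp [laurentEval, LaurentPolynomial.smul_eq_C_mul]

@[simp] lemma laurentEval_toLaurent (p : ℝ[X]) : laurentEval z hz (toLaurent p) = p.eval z := by
  rw [laurentEval, eval₂_toLaurent]
  rfl

end LaurentEval

def LaurentRep (f : ℝ → ℝ) (L : ℝ[T;T⁻¹]) : Prop :=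
  ∀ z (hz : z ≠ 0), f z = laurentEval z hz L

lemma eq_of_forall_laurentEval_eq {L L' : ℝ[T;T⁻¹]}
    (h : ∀ z (hz : z ≠ 0), laurentEval z hz L = laurentEval z hz L') : L = L' := by
  obtain ⟨N, p, hp⟩ := exists_T_pow (L - L')
  have hp₀ : p = 0 := by
    refine Polynomial.eq_zero_of_infinite_isRoot p
      ((Set.finite_singleton 0).infinite_compl.mono fun z (hz : z ≠ 0) => ?_)
    simpa [h z hz] using congrArg (laurentEval z hz) hp
  rw [hp₀, map_zero, eq_comm, (isUnit_T _).mul_left_eq_zero, sub_eq_zero] at hp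
  exact hp

lemma IsLaurentPoly.exists_laurentRep {f : ℝ → ℝ} (hf : IsLaurentPoly f) :
    ∃ L, LaurentRep f L := by
  obtain ⟨p, k, hp⟩ := hf
  exact ⟨toLaurent p * T (-k), fun z hz => by simp [hp z hz, div_eq_mul_inv]⟩

lemma coeff_toLaurent_natCast (p : ℝ[X]) (i : ℕ) : (toLaurent p).coeff i = p.coeff i := by
  rw [coeff_toLaurent]
  exact Finsupp.mapDomain_apply Nat.castEmbedding.injective _ i

lemma coeff_toLaurent_of_neg (p : ℝ[X]) {m : ℤ} (hm : m < 0) : (toLaurent p).coeff m = 0 := by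
  rw [coeff_toLaurent]
  apply Finsupp.mapDomain_of_notMem_range
  rintro ⟨i, rfl⟩
  exact absurd hm (by simp)

lemma toLaurent_trunc {L : ℝ[T;T⁻¹]} (h : ∀ m < 0, L.coeff m = 0) : toLaurent (trunc L) = L := by
  ext m
  rcases lt_or_ge m 0 with hm | hm
  · rw [h m hm, coeff_toLaurent_of_neg _ hm]
  · lift m to ℕ using hm
    rw [coeff_toLaurent_natCast]
    simp [trunc]

lemma coeff_mul_T (L : ℝ[T;T⁻¹]) (j m : ℤ) : (L * T j).coeff m = L.coeff (m - j) := by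
  rw [T, AddMonoidAlgebra.coeff_mul_single_apply, mul_one, sub_eq_add_neg]

lemma coeff_smul_T (r : ℝ) (i j : ℤ) : (r • T i : ℝ[T;T⁻¹]).coeff j = if j = i then r else 0 := by
  rw [T, AddMonoidAlgebra.smul_single', mul_one, AddMonoidAlgebra.coeff_single,
    Finsupp.single_apply]
  simp only [eq_comm]

lemma laurentEval_eq_sum (L : ℝ[T;T⁻¹]) {s : Finset ℤ} (h : ∀ m ∉ s, L.coeff m = 0) :
    ∀ z (hz : z ≠ 0), laurentEval z hz L = ∑ m ∈ s, L.coeff m * z ^ m := by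
  intro z hz
  have hL : L = ∑ m ∈ s, L.coeff m • T m := by
    ext j
    simp only [AddMonoidAlgebra.coeff_sum, Finsupp.finsetSum_apply, coeff_smul_T,
      Finset.sum_ite_eq]
    split_ifs with hj
    · rfl
    · exact h j hj
  conv_lhs => rw [hL]
  simp

lemma pow_mem_excFunModule {n k : ℕ} (hk : (k : ℤ) ∈ excDegrees n) :
    (fun z : ℝ => z ^ k) ∈ excFunModule n := by
  apply Submodule.subset_span
  rcases hk with hk | hk
  · left
    simp [show k = 0 by omega]
  · exact Or.inr ⟨k, by omega, by omega, rfl⟩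

lemma mem_excFunModule_iff {n : ℕ} {f : ℝ → ℝ} : f ∈ excFunModule n ↔
    ∃ q : ℝ[X], (∀ i : ℕ, (i : ℤ) ∉ excDegrees n → q.coeff i = 0) ∧ f = fun z => q.eval z := by
  constructor
  · intro hf
    induction hf using Submodule.span_induction with
    | mem g hg =>
      rcases hg with rfl | ⟨k, hk₂, hkn, rfl⟩
      · refine ⟨1, fun i hi => ?_, by simp⟩
        simp [Polynomial.coeff_one] at hi ⊢
        omega
      · refine ⟨X ^ k, fun i hi => ?_, by simp⟩
        simp [Polynomial.coeff_X_pow] at hi ⊢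
        omega
    | zero => exact ⟨0, by simp, by ext; simp⟩
    | add f g _ _ hf hg =>
      obtain ⟨p, hp, rfl⟩ := hf
      obtain ⟨q, hq, rfl⟩ := hg
      exact ⟨p + q, fun i hi => by simp [hp i hi, hq i hi], by ext; simp⟩
    | smul r f _ hf =>
      obtain ⟨p, hp, rfl⟩ := hf
      exact ⟨r • p, fun i hi => by simp [hp i hi], by ext; simp⟩
  · rintro ⟨q, hq, rfl⟩
    have hdeg : q.natDegree < n + 1 := by
      rw [Nat.lt_succ_iff, natDegree_le_iff_coeff_eq_zero]
      exact fun i hi => hq i (by simp; omega)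
    have hsum : (fun z => q.eval z) =
        ∑ i ∈ Finset.range (n + 1), q.coeff i • fun z : ℝ => z ^ i := by
      ext z
      conv_lhs => rw [q.as_sum_range' (n + 1) hdeg]
      simp [eval_finsetSum]
    rw [hsum]
    refine Submodule.sum_mem _ fun i _ => ?_
    by_cases hi : (i : ℤ) ∈ excDegrees n
    · exact Submodule.smul_mem _ _ (pow_mem_excFunModule hi)
    · simp [hq i hi]

lemma exists_mem_excFunModule_eqOn_iff {n : ℕ} {f : ℝ → ℝ} {L : ℝ[T;T⁻¹]} (hf : LaurentRep f L) :
    (∃ g ∈ excFunModule n, ∀ z : ℝ, z ≠ 0 → f z = g z) ↔ ∀ m ∉ excDegrees n, L.coeff m = 0 := by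
  simp_rw [mem_excFunModule_iff]
  constructor
  · rintro ⟨_, ⟨q, hq, rfl⟩, hfq⟩
    obtain rfl : L = toLaurent q :=
      eq_of_forall_laurentEval_eq fun z hz => by simp [← hf z hz, hfq z hz]
    intro m hm
    rcases lt_or_ge m 0 with hm₀ | hm₀
    · exact coeff_toLaurent_of_neg q hm₀
    · lift m to ℕ using hm₀
      rw [coeff_toLaurent_natCast, hq m hm]
  · intro hL
    have htrunc := toLaurent_trunc fun m hm => hL m (by simp; omega)
    refine ⟨_, ⟨trunc L, fun i hi => ?_, rfl⟩, fun z hz => ?_⟩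
    · rw [← coeff_toLaurent_natCast, htrunc, hL i hi]
    · rw [hf z hz, ← laurentEval_toLaurent hz, htrunc]


def PreservesExcModule (n : ℕ) (a b c : ℝ → ℝ) : Prop :=
  ∀ f ∈ excFunModule n, ∃ g ∈ excFunModule n, ∀ z : ℝ, z ≠ 0 →
    a z * deriv (deriv f) z + b z * deriv f z + c z * f z = g z

lemma deriv_polynomial_eval (p : ℝ[X]) :
    (deriv fun z => p.eval z) = fun z => (derivative p).eval z :=
  funext fun _ => p.deriv

lemma preservesExcModule_iff_pow {n : ℕ} {a b c : ℝ → ℝ} : PreservesExcModule n a b c ↔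
    ∀ k : ℕ, (k : ℤ) ∈ excDegrees n → ∃ g ∈ excFunModule n, ∀ z : ℝ, z ≠ 0 →
      a z * deriv (deriv fun z => z ^ k) z + b z * deriv (fun z => z ^ k) z + c z * z ^ k =
        g z := by
  refine ⟨fun h k hk => h _ (pow_mem_excFunModule hk), fun h f hf => ?_⟩
  induction hf using Submodule.span_induction with
  | mem f hf =>
    rcases hf with rfl | ⟨k, hk₂, hkn, rfl⟩
    · simpa using h 0 (by simp)
    · exact h k (by simp; omega)
  | zero => exact ⟨0, zero_mem _, fun z _ => by simp⟩
  | add f g hf hg ihf ihg =>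
    obtain ⟨p, -, rfl⟩ := mem_excFunModule_iff.1 hf
    obtain ⟨q, -, rfl⟩ := mem_excFunModule_iff.1 hg
    obtain ⟨F, hF, hpF⟩ := ihf
    obtain ⟨G, hG, hqG⟩ := ihg
    refine ⟨F + G, add_mem hF hG, fun z hz => ?_⟩
    have e : (fun z => p.eval z) + (fun z => q.eval z) = fun z => (p + q).eval z := by
      ext; simp
    simp only [deriv_polynomial_eval, e] at hpF hqG ⊢
    simp only [derivative_add, eval_add, Pi.add_apply]
    linear_combination hpF z hz + hqG z hz
  | smul r f hf ihf =>
    obtain ⟨p, -, rfl⟩ := mem_excFunModule_iff.1 hf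
    obtain ⟨F, hF, hpF⟩ := ihf
    refine ⟨r • F, Submodule.smul_mem _ r hF, fun z hz => ?_⟩
    have e : r • (fun z => p.eval z) = fun z => (r • p).eval z := by
      ext; simp
    simp only [deriv_polynomial_eval, e] at hpF ⊢
    simp only [derivative_smul, eval_smul, Pi.smul_apply, smul_eq_mul]
    linear_combination r * hpF z hz

noncomputable def opPow (A B C : ℝ[T;T⁻¹]) (k : ℕ) : ℝ[T;T⁻¹] :=
  ((k : ℝ) * (k - 1)) • (A * T (k - 2)) + (k : ℝ) • (B * T (k - 1)) + C * T k

lemma coeff_opPow (A B C : ℝ[T;T⁻¹]) (k : ℕ) (s : ℤ) :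
    (opPow A B C k).coeff (k + s) = imageCoeff A.coeff B.coeff C.coeff k s := by
  simp only [opPow, AddMonoidAlgebra.coeff_add, AddMonoidAlgebra.coeff_smul, Finsupp.add_apply,
    Finsupp.smul_apply, smul_eq_mul, coeff_mul_T, imageCoeff]
  ring_nf

lemma laurentRep_apply_pow {a b c : ℝ → ℝ} {A B C : ℝ[T;T⁻¹]} (hA : LaurentRep a A)
    (hB : LaurentRep b B) (hC : LaurentRep c C) (k : ℕ) :
    LaurentRep (fun z => a z * deriv (deriv fun z => z ^ k) z + b z * deriv (fun z => z ^ k) z +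
      c z * z ^ k) (opPow A B C k) := by
  intro z hz
  have hpow : (fun z : ℝ => z ^ k) = fun z => z ^ (k : ℤ) := by ext; simp
  rw [hpow, deriv_zpow', deriv_const_mul_field', deriv_zpow']
  simp only [opPow, map_add, map_mul, laurentEval_smul, laurentEval_T, hA z hz, hB z hz, hC z hz]
  push_cast
  rw [zpow_natCast]
  ring_nf

lemma preservesExcModule_iff_preservesDegrees {n : ℕ} {a b c : ℝ → ℝ} {A B C : ℝ[T;T⁻¹]}
    (hA : LaurentRep a A) (hB : LaurentRep b B) (hC : LaurentRep c C) :
    PreservesExcModule n a b c ↔ PreservesDegrees n A.coeff B.coeff C.coeff := by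
  rw [preservesExcModule_iff_pow]
  refine forall₂_congr fun k _ => (exists_mem_excFunModule_eqOn_iff
    (laurentRep_apply_pow hA hB hC k)).trans ⟨fun h s hs => ?_, fun h m hm => ?_⟩
  · rw [← coeff_opPow]
    exact h _ hs
  · rw [← add_sub_cancel (k : ℤ) m, coeff_opPow]
    exact h _ (by simpa using hm)


def IsExcCombination (n : ℕ) (a b c : ℝ → ℝ) : Prop :=
  ∃ l₁ l₂ l₃ l₄ l₅ l₆ l₇ : ℝ, ∀ z : ℝ, z ≠ 0 →
    a z = l₁ * z ^ 4 + l₂ * z ^ 3 + l₃ * z ^ 2 + l₄ * z + l₅ ∧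
    b z = l₁ * (2 * (1 - (n : ℝ))) * z ^ 3 + l₂ * (-((n : ℝ) - 1)) * z ^ 2
            + l₆ * z - l₄ - l₅ * 2 / z ∧
    c z = l₁ * ((n : ℝ) * ((n : ℝ) - 1)) * z ^ 2 + l₇

section ExcCombination

variable {n : ℕ} {a b c : ℝ → ℝ} {A B C : ℝ[T;T⁻¹]}

lemma ExcCoeffs.isExcCombination (hA : LaurentRep a A) (hB : LaurentRep b B)
    (hC : LaurentRep c C) (h : ExcCoeffs n A.coeff B.coeff C.coeff) : IsExcCombination n a b c := by
  have eA := laurentEval_eq_sum A (s := {0, 1, 2, 3, 4})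
    fun m hm => h.α_eq_zero m (by simp at hm; omega)
  have eB := laurentEval_eq_sum B (s := {-1, 0, 1, 2, 3})
    fun m hm => h.β_eq_zero m (by simp at hm; omega)
  have eC := laurentEval_eq_sum C (s := {0, 2})
    fun m hm => h.γ_eq_zero m (by simp at hm; omega) (by simp at hm; omega)
  refine ⟨A.coeff 4, A.coeff 3, A.coeff 2, A.coeff 1, A.coeff 0, B.coeff 1, C.coeff 0,
    fun z hz => ⟨?_, ?_, ?_⟩⟩
  · simp [hA z hz, eA z hz]
    ring
  · simp [hB z hz, eB z hz, h.β_three, h.β_two, h.β_zero, h.β_neg_one]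
    ring
  · simp [hC z hz, eC z hz, h.γ_two]
    ring

lemma IsExcCombination.excCoeffs (hA : LaurentRep a A) (hB : LaurentRep b B)
    (hC : LaurentRep c C) (h : IsExcCombination n a b c) :
    ExcCoeffs n A.coeff B.coeff C.coeff := by
  obtain ⟨l₁, l₂, l₃, l₄, l₅, l₆, l₇, hl⟩ := h
  obtain rfl : A = l₁ • T 4 + l₂ • T 3 + l₃ • T 2 + l₄ • T 1 + l₅ • T 0 :=
    eq_of_forall_laurentEval_eq fun z hz => by simp [← hA z hz, (hl z hz).1]
  obtain rfl : B = (l₁ * (2 * (1 - n))) • T 3 + (l₂ * -(n - 1)) • T 2 + l₆ • T 1 +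
      (-l₄) • T 0 + (-(l₅ * 2)) • T (-1) :=
    eq_of_forall_laurentEval_eq fun z hz => by
      simp [← hB z hz, (hl z hz).2.1]
      ring
  obtain rfl : C = (l₁ * (n * (n - 1))) • T 2 + l₇ • T 0 :=
    eq_of_forall_laurentEval_eq fun z hz => by simp [← hC z hz, (hl z hz).2.2]
  refine ⟨fun j hj => ?_, fun j hj => ?_, fun j h₀ h₂ => ?_, ?_, ?_, ?_, ?_, ?_⟩ <;>
    simp only [AddMonoidAlgebra.coeff_add, Finsupp.add_apply, coeff_smul_T]
  · split_ifs <;> first | omega | ring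
  · split_ifs <;> first | omega | ring
  · split_ifs <;> first | omega | ring
  all_goals norm_num [mul_comm]

end ExcCombination

/-- a second order operator T = a∂² + b∂ + c with Laurent-polynomial
coefficients preserves 𝒫⁽¹⁾ₙ (n ≥ 4) if and only if it is a real linear combination of
the seven operators
z⁴∂² + 2(1-n)z³∂ + n(n-1)z², z³∂² - (n-1)z²∂, z²∂², z∂² - ∂, ∂² - 2z⁻¹∂, z∂, 1. -/
theorem exceptional_module_classification
    (n : ℕ) (hn : 4 ≤ n) (a b c : ℝ → ℝ)
    (ha : IsLaurentPoly a) (hb : IsLaurentPoly b) (hc : IsLaurentPoly c) :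
    (∀ f ∈ excFunModule n, ∃ g ∈ excFunModule n, ∀ z : ℝ, z ≠ 0 →
        a z * deriv (deriv f) z + b z * deriv f z + c z * f z = g z)
    ↔ ∃ l₁ l₂ l₃ l₄ l₅ l₆ l₇ : ℝ, ∀ z : ℝ, z ≠ 0 →
        a z = l₁ * z ^ 4 + l₂ * z ^ 3 + l₃ * z ^ 2 + l₄ * z + l₅ ∧
        b z = l₁ * (2 * (1 - (n : ℝ))) * z ^ 3 + l₂ * (-((n : ℝ) - 1)) * z ^ 2
                + l₆ * z - l₄ - l₅ * 2 / z ∧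
        c z = l₁ * ((n : ℝ) * ((n : ℝ) - 1)) * z ^ 2 + l₇ := by
  obtain ⟨A, hA⟩ := ha.exists_laurentRep
  obtain ⟨B, hB⟩ := hb.exists_laurentRep
  obtain ⟨C, hC⟩ := hc.exists_laurentRep
  change PreservesExcModule n a b c ↔ IsExcCombination n a b c
  rw [preservesExcModule_iff_preservesDegrees hA hB hC]
  exact ⟨fun h => (h.excCoeffs hn).isExcCombination hA hB hC,
    fun h => (h.excCoeffs hA hB hC).preservesDegrees⟩
end
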